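/- arXiv:1301.4485 — 2 statements merged into one kernel-verified Lean document; each statement's English description precedes it below -/
import Mathlib

section
/- Let L be a complete lattice equipped with a commutative, associative binary operation ∧ₜ (a 'tensor') that distributes over arbitrary joins and satisfies x ∧ₜ y ≤ x for all x, y. Suppose there is an order-reversing involution a : L → L satisfying: e ≤ a(x) if and only if e ∧ₜ x = 0. If every nonzero x ∈ L satisfies x ∧ₜ x ≠ 0, then every element x of L is complemented in the sense that x ∨ a(x) is the maximum element of L. -/
/-! For `c := a (x ⊔ a x)` we have `c ≤ a x ≤ x ⊔ a x = a c`, hence `c ∧ₜ c = 0`. Without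
square-zero elements `c = 0`, and applying the involution gives `x ⊔ a x = a 0 = ⊤`. -/

section TensorComplement

variable {L : Type*} [CompleteLattice L] {t : L → L → L} {a : L → L}

theorem tensor_monotone_right (hdist : ∀ x (S : Set L), t x (sSup S) = ⨆ y ∈ S, t x y)
    (x : L) : Monotone (t x) := by
  intro y z hyz
  have h := hdist x {y, z}
  rw [sSup_pair, sup_eq_right.mpr hyz, iSup_pair] at h
  exact h ▸ le_sup_left

theorem tensor_bot_right (hdist : ∀ x (S : Set L), t x (sSup S) = ⨆ y ∈ S, t x y)
    (x : L) : t x ⊥ = ⊥ := by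
  simpa using hdist x ∅

theorem antitone_of_le_iff_tensor_eq_bot (hmono : ∀ x, Monotone (t x))
    (hgal : ∀ e x, e ≤ a x ↔ t e x = ⊥) : Antitone a := fun _ _ hxy =>
  (hgal _ _).2 (le_bot_iff.1 ((hgal _ _).1 le_rfl ▸ hmono _ hxy))

theorem apply_bot_eq_top_of_le_iff_tensor_eq_bot
    (hdist : ∀ x (S : Set L), t x (sSup S) = ⨆ y ∈ S, t x y)
    (hgal : ∀ e x, e ≤ a x ↔ t e x = ⊥) : a ⊥ = ⊤ :=
  top_unique ((hgal ⊤ ⊥).2 (tensor_bot_right hdist ⊤))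

theorem eq_bot_of_le_apply_self (hgal : ∀ e x, e ≤ a x ↔ t e x = ⊥)
    (hsq : ∀ x, x ≠ ⊥ → t x x ≠ ⊥) {e : L} (he : e ≤ a e) : e = ⊥ := by
  by_contra hne
  exact hsq e hne ((hgal e e).1 he)

end TensorComplement

theorem stmt_4_general {L : Type*} [CompleteLattice L] (t : L → L → L) (a : L → L)
    (hdist : ∀ x (S : Set L), t x (sSup S) = ⨆ y ∈ S, t x y)
    (hinv : ∀ x, a (a x) = x)
    (hgal : ∀ e x, e ≤ a x ↔ t e x = ⊥)
    (hsq : ∀ x, x ≠ ⊥ → t x x ≠ ⊥) :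
    ∀ x, x ⊔ a x = ⊤ := by
  intro x
  have hanti : Antitone a :=
    antitone_of_le_iff_tensor_eq_bot (tensor_monotone_right hdist) hgal
  have hle : a (x ⊔ a x) ≤ a (a (x ⊔ a x)) := by
    rw [hinv]
    exact (hanti le_sup_left).trans le_sup_right
  have hbot : a (x ⊔ a x) = ⊥ := eq_bot_of_le_apply_self hgal hsq hle
  calc x ⊔ a x = a (a (x ⊔ a x)) := (hinv _).symm
    _ = a ⊥ := by rw [hbot]
    _ = ⊤ := apply_bot_eq_top_of_le_iff_tensor_eq_bot hdist hgal

/-- If a complete lattice carries a commutative associative tensor distributing over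
arbitrary joins with `x ∧ₜ y ≤ x`, and an order-reversing involution `a` with
`e ≤ a x ↔ e ∧ₜ x = 0`, and there are no square-zero elements, then every `x` is
complemented: `x ⊔ a x` is the maximum. -/
theorem stmt_4 {L : Type*} [CompleteLattice L] (t : L → L → L) (a : L → L)
    (hcomm : ∀ x y, t x y = t y x)
    (hassoc : ∀ x y z, t (t x y) z = t x (t y z))
    (hdist : ∀ x (S : Set L), t x (sSup S) = ⨆ y ∈ S, t x y)
    (hle : ∀ x y, t x y ≤ x)
    (hanti : ∀ x y, x ≤ y → a y ≤ a x)
    (hinv : ∀ x, a (a x) = x)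
    (hgal : ∀ e x, e ≤ a x ↔ t e x = ⊥)
    (hsq : ∀ x, x ≠ ⊥ → t x x ≠ ⊥) :
    ∀ x, x ⊔ a x = ⊤ :=
  stmt_4_general t a hdist hinv hgal hsq
end

section
/- Let L be a complete lattice with a commutative associative tensor ∧ₜ distributing over arbitrary joins and with unit equal to the maximum 1. The subset DL of tensor-idempotent elements (x with x ∧ₜ x = x) is closed under arbitrary joins, and on DL the operation ∧ₜ computes the greatest lower bound within DL; consequently DL is a frame (meets distribute over arbitrary joins). -/
/-! Distributivity over joins makes the tensor monotone in each argument. Hence an idempotent `z`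
below `x` and `y` satisfies `z = z ∧ₜ z ≤ x ∧ₜ y`, and the same estimate shows that a join of
idempotents is idempotent; together with `x ∧ₜ y ≤ x` this makes `∧ₜ` the meet of `DL`. -/

theorem monotone_of_map_sSup {α β : Type*} [CompleteLattice α] [CompleteLattice β] {f : α → β}
    (hf : ∀ S : Set α, f (sSup S) = ⨆ y ∈ S, f y) : Monotone f :=
  OrderHomClass.mono (sSupHom.mk f fun S => (hf S).trans sSup_image.symm)

theorem tensor_self_of_tensor_self {L : Type*} {t : L → L → L} (hcomm : ∀ x y, t x y = t y x)
    (hassoc : ∀ x y z, t (t x y) z = t x (t y z)) {x y : L} (hx : t x x = x) (hy : t y y = y) :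
    t (t x y) (t x y) = t x y :=
  calc t (t x y) (t x y) = t x (t y (t y x)) := by rw [hassoc, hcomm x y]
    _ = t (t x x) (t y y) := by rw [← hassoc y y x, hcomm _ x, ← hassoc, hassoc x x]
    _ = t x y := by rw [hx, hy]

section Tensor

variable {L : Type*} [CompleteLattice L] {t : L → L → L}

theorem tensor_le_tensor (hcomm : ∀ x y, t x y = t y x)
    (hdist : ∀ x (S : Set L), t x (sSup S) = ⨆ y ∈ S, t x y)
    {x x' y y' : L} (hx : x ≤ x') (hy : y ≤ y') : t x y ≤ t x' y' :=
  calc t x y ≤ t x y' := monotone_of_map_sSup (hdist x) hy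
    _ = t y' x := hcomm x y'
    _ ≤ t y' x' := monotone_of_map_sSup (hdist y') hx
    _ = t x' y' := hcomm y' x'

theorem tensor_sSup_self_of_forall (hcomm : ∀ x y, t x y = t y x)
    (hdist : ∀ x (S : Set L), t x (sSup S) = ⨆ y ∈ S, t x y) (hle : ∀ x y, t x y ≤ x)
    {S : Set L} (hS : ∀ x ∈ S, t x x = x) : t (sSup S) (sSup S) = sSup S :=
  le_antisymm (hle _ _) <| sSup_le fun x hx =>
    (hS x hx).ge.trans (tensor_le_tensor hcomm hdist (le_sSup hx) (le_sSup hx))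

theorem le_tensor_of_tensor_self (hcomm : ∀ x y, t x y = t y x)
    (hdist : ∀ x (S : Set L), t x (sSup S) = ⨆ y ∈ S, t x y)
    {x y z : L} (hz : t z z = z) (hzx : z ≤ x) (hzy : z ≤ y) : z ≤ t x y :=
  hz.ge.trans (tensor_le_tensor hcomm hdist hzx hzy)

end Tensor

theorem stmt_7_general {L : Type*} [CompleteLattice L] (t : L → L → L)
    (hcomm : ∀ x y, t x y = t y x)
    (hassoc : ∀ x y z, t (t x y) z = t x (t y z))
    (hdist : ∀ x (S : Set L), t x (sSup S) = ⨆ y ∈ S, t x y)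
    (hle : ∀ x y, t x y ≤ x) :
    (∀ S : Set L, (∀ x ∈ S, t x x = x) → t (sSup S) (sSup S) = sSup S) ∧
    (∀ x y, t x x = x → t y y = y →
      t (t x y) (t x y) = t x y ∧ t x y ≤ x ∧ t x y ≤ y ∧
      (∀ z, t z z = z → z ≤ x → z ≤ y → z ≤ t x y)) ∧
    (∀ x, ∀ S : Set L, t x (sSup S) = ⨆ y ∈ S, t x y) :=
  ⟨fun _ => tensor_sSup_self_of_forall hcomm hdist hle,
    fun x y hx hy => ⟨tensor_self_of_tensor_self hcomm hassoc hx hy, hle x y,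
      (hcomm x y).trans_le (hle y x), fun _ => le_tensor_of_tensor_self hcomm hdist⟩,
    hdist⟩

/-- The sub-poset `DL` of tensor-idempotent elements is closed under arbitrary joins,
the tensor computes greatest lower bounds within `DL`, and meets (given by the tensor)
distribute over arbitrary joins, so `DL` is a frame. -/
theorem stmt_7 {L : Type*} [CompleteLattice L] (t : L → L → L)
    (hcomm : ∀ x y, t x y = t y x)
    (hassoc : ∀ x y z, t (t x y) z = t x (t y z))
    (hdist : ∀ x (S : Set L), t x (sSup S) = ⨆ y ∈ S, t x y)
    (hunit : ∀ x, t x ⊤ = x)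
    (hle : ∀ x y, t x y ≤ x) :
    (∀ S : Set L, (∀ x ∈ S, t x x = x) → t (sSup S) (sSup S) = sSup S) ∧
    (∀ x y, t x x = x → t y y = y →
      t (t x y) (t x y) = t x y ∧ t x y ≤ x ∧ t x y ≤ y ∧
      (∀ z, t z z = z → z ≤ x → z ≤ y → z ≤ t x y)) ∧
    (∀ x, ∀ S : Set L, t x (sSup S) = ⨆ y ∈ S, t x y) :=
  stmt_7_general t hcomm hassoc hdist hle
end
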